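/- Let G be a locally compact Hausdorff topological group and H a closed subgroup of G that is cocompact in G, i.e. there exists a compact subset K ⊆ G such that G = HK = {hk : h ∈ H, k ∈ K}. Then G is compactly presented if and only if H is compactly presented. -/

import Mathlib

/-!
Choose a retraction `π : G → H` (`π h = h` on `H`) such that `(π g)⁻¹ g` stays in the compact set
`L = K ∪ {1}`.

From `G` to `H`: Reidemeister–Schreier rewriting along `π` turns a word in a compact generating
set `S` of `G` into a word of the same length in the letters `(π q)⁻¹ π (q s) ∈ L S L⁻¹`. It
sends short relators of `G` to short relators of `H`, and rewriting an `S`-word that spells a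
letter `t` of `H` gives back `t` up to short relators.

From `H` to `G`: take the generators `T ∪ L`. Every `g` is `π g · (π g)⁻¹ g`, and the relations
`ρ(g) s = w · ρ(g s)`, with `ρ g = (π g)⁻¹ g` and `w` a short `T`-word, together with the
relators of `H`, present `G`.

Bounded lengths come from Baire's theorem: in a locally compact group generated by a compact
set, every compact set has bounded word length.
-/

open scoped Pointwise

/-- A group `G` is *boundedly presented* by a subset `S ⊆ G` if there are an integer `n` and a
set `R` of words of length at most `n` in the letters `S ∪ S⁻¹`, each representing the identity
in `G`, such that the canonical homomorphism from the quotient of the free group on `S` by the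
normal closure of `R` onto `G` is an isomorphism. -/
def BoundedlyPresentedBy (G : Type*) [Group G] (S : Set G) : Prop :=
  ∃ (n : ℕ) (R : Set (FreeGroup S)),
    (∀ r ∈ R, ∃ w : List (S × Bool), FreeGroup.mk w = r ∧ w.length ≤ n) ∧
    Function.Surjective (FreeGroup.lift (fun s : S => (s : G))) ∧
    MonoidHom.ker (FreeGroup.lift (fun s : S => (s : G))) = Subgroup.normalClosure R

/-- A topological group is *compactly presented* if it is boundedly presented by some compact
subset. -/
def CompactlyPresented (G : Type*) [Group G] [TopologicalSpace G] : Prop :=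
  ∃ S : Set G, IsCompact S ∧ BoundedlyPresentedBy G S

namespace FreeGroup

variable {α : Type*}

theorem norm_map_le [DecidableEq α] {β : Type*} [DecidableEq β] (f : α → β) (x : FreeGroup α) :
    (map f x).norm ≤ x.norm := by
  conv_lhs => rw [← mk_toWord (x := x), map.mk]
  exact norm_mk_le.trans (List.length_map _).le

theorem lift_image_norm_le [DecidableEq α] {G : Type*} [Group G] (f : α → G) (m : ℕ) :
    lift f '' {u | u.norm ≤ m} = insert 1 (Set.range f ∪ (Set.range f)⁻¹) ^ m := by
  set V := insert 1 (Set.range f ∪ (Set.range f)⁻¹)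
  apply subset_antisymm
  · rintro _ ⟨u, hu, rfl⟩
    have hword : ∀ w : List (α × Bool), lift f (mk w) ∈ V ^ w.length := by
      intro w
      induction w with
      | nil => simp
      | cons p w ih =>
        rw [List.length_cons, pow_succ']
        refine ⟨cond p.2 (f p.1) (f p.1)⁻¹, ?_, _, ih, by simp [lift_mk]⟩
        cases p.2
        · exact .inr (.inr ⟨p.1, by simp⟩)
        · exact .inr (.inl ⟨p.1, rfl⟩)
    rw [← mk_toWord (x := u)]
    exact Set.pow_subset_pow_right (Set.mem_insert 1 _) hu (hword _)
  · induction m with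
    | zero => rintro x rfl; exact ⟨1, by simp⟩
    | succ m ih =>
      rintro _ ⟨y, hy, z, hz, rfl⟩
      obtain ⟨u, hu : u.norm ≤ m, rfl⟩ := ih hy
      rcases hz with rfl | ⟨a, rfl⟩ | ⟨a, ha⟩
      · exact ⟨u, hu.trans m.le_succ, (mul_one _).symm⟩
      · exact ⟨u * of a, (norm_mul_le _ _).trans (by simp [hu]), by simp⟩
      · refine ⟨u * (of a)⁻¹, (norm_mul_le _ _).trans (by simp [hu]), ?_⟩
        simp [ha]

theorem ker_le_of_mul_of {G : Type*} [Group G] (φ : FreeGroup α →* G)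
    (N : Subgroup (FreeGroup α)) [N.Normal] (X : G → FreeGroup α ⧸ N)
    (hX : ∀ g a, X g * (of a : FreeGroup α ⧸ N) = X (g * φ (of a))) : φ.ker ≤ N := by
  have key : ∀ (u : FreeGroup α) g, X g * (u : FreeGroup α ⧸ N) = X (g * φ u) := by
    intro u
    induction u using FreeGroup.induction_on with
    | C1 => simp
    | of a => exact fun g => hX g a
    | inv_of a ih =>
      intro g
      have := ih (g * (φ (of a))⁻¹)
      rw [inv_mul_cancel_right] at this
      rw [QuotientGroup.mk_inv, _root_.map_inv, ← this, mul_inv_cancel_right]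
    | mul u v ihu ihv =>
      intro g
      rw [QuotientGroup.mk_mul, ← mul_assoc, ihu, ihv, _root_.map_mul, mul_assoc]
  intro u hu
  have := key u 1
  rwa [φ.mem_ker.1 hu, mul_one, mul_eq_left, QuotientGroup.eq_one_iff] at this

end FreeGroup

section BoundedPresentation

variable {G : Type*} [Group G] [DecidableEq G]

def shortRelators (S : Set G) (n : ℕ) : Set (FreeGroup S) :=
  {r | r.norm ≤ n ∧ FreeGroup.lift ((↑) : S → G) r = 1}

theorem shortRelators_mono {S : Set G} {n n' : ℕ} (h : n ≤ n') :
    shortRelators S n ⊆ shortRelators S n' :=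
  fun _ hr => ⟨hr.1.trans h, hr.2⟩

theorem boundedlyPresentedBy_iff {S : Set G} :
    BoundedlyPresentedBy G S ↔ Function.Surjective (FreeGroup.lift ((↑) : S → G)) ∧
      ∃ n, (FreeGroup.lift ((↑) : S → G)).ker ≤ Subgroup.normalClosure (shortRelators S n) := by
  constructor
  · rintro ⟨n, R, hR, hsurj, hker⟩
    refine ⟨hsurj, n, hker.trans_le (Subgroup.normalClosure_mono fun r hr => ⟨?_, ?_⟩)⟩
    · obtain ⟨w, rfl, hw⟩ := hR r hr
      exact FreeGroup.norm_mk_le.trans hw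
    · rw [← MonoidHom.mem_ker, hker]
      exact Subgroup.subset_normalClosure hr
  · rintro ⟨hsurj, n, hker⟩
    refine ⟨n, shortRelators S n, fun r hr => ⟨r.toWord, FreeGroup.mk_toWord, hr.1⟩, hsurj,
      hker.antisymm (Subgroup.normalClosure_le_normal fun r hr => hr.2)⟩

theorem mk_eq_mk_of_lift_eq {S : Set G} {n : ℕ} {u v : FreeGroup S}
    (huv : FreeGroup.lift ((↑) : S → G) u = FreeGroup.lift (↑) v) (hn : u.norm + v.norm ≤ n) :
    (u : FreeGroup S ⧸ Subgroup.normalClosure (shortRelators S n)) = v :=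
  QuotientGroup.eq.2 (Subgroup.subset_normalClosure
    ⟨(FreeGroup.norm_mul_le _ _).trans (by rwa [FreeGroup.norm_inv_eq]), by simp [huv]⟩)

end BoundedPresentation

section WordLength

variable {G : Type*} [Group G] [TopologicalSpace G] [IsTopologicalGroup G] [T2Space G]
  [LocallyCompactSpace G]

theorem IsCompact.exists_subset_pow {V C : Set G} (hV : IsCompact V) (hV1 : 1 ∈ V)
    (hVG : ⋃ n, V ^ n = Set.univ) (hC : IsCompact C) : ∃ n, C ⊆ V ^ n := by
  have hpow : ∀ n, IsCompact (V ^ n) := by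
    intro n
    induction n with
    | zero => simp
    | succ n ih => simpa [pow_succ] using ih.mul hV
  obtain ⟨n₀, u, hu⟩ := nonempty_interior_of_iUnion_of_closed (fun n => (hpow n).isClosed) hVG
  have hcover : C ⊆ ⋃ n, interior (V ^ n) := by
    intro x _
    obtain ⟨k, hk⟩ := Set.mem_iUnion.1 (hVG.symm ▸ Set.mem_univ (x * u⁻¹))
    have hsub : (x * u⁻¹) • interior (V ^ n₀) ⊆ interior (V ^ (k + n₀)) := by
      rw [(isOpen_interior.smul _).subset_interior_iff, pow_add]
      exact (Set.smul_set_mono interior_subset).trans (Set.smul_set_subset_mul hk)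
    exact Set.mem_iUnion.2 ⟨k + n₀, hsub ⟨u, hu, by simp⟩⟩
  have hmono : Monotone fun n => interior (V ^ n) :=
    fun a b hab => interior_mono (Set.pow_subset_pow_right hV1 hab)
  obtain ⟨n, hn⟩ := hC.elim_directed_cover _ (fun _ => isOpen_interior) hcover hmono.directed_le
  exact ⟨n, hn.trans interior_subset⟩

theorem IsCompact.exists_forall_norm_le [DecidableEq G] {S C : Set G} (hS : IsCompact S)
    (hgen : Function.Surjective (FreeGroup.lift ((↑) : S → G))) (hC : IsCompact C) :
    ∃ m, ∀ c ∈ C, ∃ u : FreeGroup S, FreeGroup.lift (↑) u = c ∧ u.norm ≤ m := by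
  have hball := FreeGroup.lift_image_norm_le ((↑) : S → G)
  rw [Subtype.range_coe] at hball
  have hV : IsCompact (insert 1 (S ∪ S⁻¹)) := (hS.union hS.inv).insert 1
  have hVG : ⋃ n, insert 1 (S ∪ S⁻¹) ^ n = Set.univ := by
    refine Set.eq_univ_of_forall fun g => ?_
    obtain ⟨u, rfl⟩ := hgen g
    exact Set.mem_iUnion.2 ⟨u.norm, hball _ ▸ ⟨u, le_refl u.norm, rfl⟩⟩
  obtain ⟨m, hm⟩ := hV.exists_subset_pow (Set.mem_insert 1 _) hVG hC
  refine ⟨m, fun c hc => ?_⟩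
  obtain ⟨u, hu, rfl⟩ := (hball m).symm ▸ hm hc
  exact ⟨u, rfl, hu⟩

end WordLength

def rightShift (G M : Type*) [Group G] [Group M] : G →* MulAut (G → M) where
  toFun g :=
    { toFun := fun f x => f (x * g)
      invFun := fun f x => f (x * g⁻¹)
      left_inv := fun f => by simp
      right_inv := fun f => by simp
      map_mul' := fun _ _ => rfl }
  map_one' := by ext; simp
  map_mul' g h := by ext; simp [mul_assoc]

namespace Rewriting

variable {G H : Type*} [Group G] [Group H] {S : Set G} {T : Set H} (π : G → H)
  (hT : ∀ (q : G) (s : S), (π q)⁻¹ * π (q * s) ∈ T)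

-- The multiplication of the semidirect product encodes the cocycle rule `rewrite_mul`.
def hom : FreeGroup S →* (G → FreeGroup T) ⋊[rightShift G (FreeGroup T)] G :=
  FreeGroup.lift fun s => ⟨fun x => FreeGroup.of ⟨(π x)⁻¹ * π (x * s), hT x s⟩, s⟩

def rewrite (x : G) (u : FreeGroup S) : FreeGroup T :=
  (hom π hT u).left x

theorem hom_right (u : FreeGroup S) : (hom π hT u).right = FreeGroup.lift (↑) u := by
  have : SemidirectProduct.rightHom.comp (hom π hT) = FreeGroup.lift ((↑) : S → G) :=
    FreeGroup.ext_hom _ _ fun s => by simp [hom]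
  exact DFunLike.congr_fun this u

theorem rewrite_of (x : G) (s : S) :
    rewrite π hT x (FreeGroup.of s) = FreeGroup.of ⟨(π x)⁻¹ * π (x * s), hT x s⟩ := by
  simp [rewrite, hom]

theorem rewrite_one (x : G) : rewrite π hT x 1 = 1 := by
  simp [rewrite]

theorem rewrite_mul (x : G) (u v : FreeGroup S) :
    rewrite π hT x (u * v) = rewrite π hT x u * rewrite π hT (x * FreeGroup.lift (↑) u) v := by
  simp only [rewrite, map_mul, SemidirectProduct.mul_left, ← hom_right π hT u]
  rfl

theorem rewrite_inv (x : G) (u : FreeGroup S) :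
    rewrite π hT x u⁻¹ = (rewrite π hT (x * (FreeGroup.lift (↑) u)⁻¹) u)⁻¹ := by
  have := rewrite_mul π hT x u⁻¹ u
  rw [inv_mul_cancel, rewrite_one, map_inv] at this
  exact eq_inv_of_mul_eq_one_left this.symm

theorem lift_rewrite (x : G) (u : FreeGroup S) :
    FreeGroup.lift (↑) (rewrite π hT x u) = (π x)⁻¹ * π (x * FreeGroup.lift (↑) u) := by
  induction u using FreeGroup.induction_on generalizing x with
  | C1 => simp [rewrite_one]
  | of s => simp [rewrite_of]
  | inv_of s ih => simp [rewrite_inv, ih]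
  | mul u v ihu ihv => simp [rewrite_mul, ihu, ihv, mul_assoc]

theorem norm_rewrite_le [DecidableEq G] [DecidableEq H] (x : G) (u : FreeGroup S) :
    (rewrite π hT x u).norm ≤ u.norm := by
  suffices ∀ (w : List (S × Bool)) x, (rewrite π hT x (FreeGroup.mk w)).norm ≤ w.length by
    simpa only [FreeGroup.norm, FreeGroup.mk_toWord] using this u.toWord x
  intro w
  induction w with
  | nil => simp [← FreeGroup.one_eq_mk, rewrite_one]
  | cons p w ih =>
    intro x
    have hletter : ∀ y, (rewrite π hT y (FreeGroup.mk [p])).norm ≤ 1 := by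
      intro y
      obtain ⟨s, _ | _⟩ := p
      · rw [show FreeGroup.mk [(s, false)] = (FreeGroup.of s)⁻¹ from rfl, rewrite_inv,
          FreeGroup.norm_inv_eq, rewrite_of, FreeGroup.norm_of]
      · rw [show FreeGroup.mk [(s, true)] = FreeGroup.of s from rfl, rewrite_of,
          FreeGroup.norm_of]
    rw [← List.singleton_append, ← FreeGroup.mul_mk, rewrite_mul, List.length_append,
      List.length_singleton]
    exact (FreeGroup.norm_mul_le _ _).trans (add_le_add (hletter x) (ih _))

theorem rewrite_mem_shortRelators [DecidableEq G] [DecidableEq H] {n : ℕ} {r : FreeGroup S}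
    (hr : r ∈ shortRelators S n) (x : G) : rewrite π hT x r ∈ shortRelators T n :=
  ⟨(norm_rewrite_le π hT x r).trans hr.1, by rw [lift_rewrite, hr.2, mul_one, inv_mul_cancel]⟩

theorem rewrite_mem_of_mem_normalClosure {R : Set (FreeGroup S)}
    (hR : R ⊆ (FreeGroup.lift ((↑) : S → G)).ker) {N : Subgroup (FreeGroup T)} [N.Normal]
    (hRN : ∀ r ∈ R, ∀ x, rewrite π hT x r ∈ N) {u : FreeGroup S}
    (hu : u ∈ Subgroup.normalClosure R) (x : G) : rewrite π hT x u ∈ N := by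
  -- the elements all of whose rewrites lie in `N` form the kernel of a homomorphism
  let q : (G → FreeGroup T) ⋊[rightShift G (FreeGroup T)] G →*
      (G → FreeGroup T ⧸ N) ⋊[rightShift G (FreeGroup T ⧸ N)] G :=
    SemidirectProduct.map ((QuotientGroup.mk' N).compLeft G) (MonoidHom.id G) fun _ => rfl
  have hker : ∀ u, u ∈ (q.comp (hom π hT)).ker ↔
      (∀ x, (rewrite π hT x u : FreeGroup T ⧸ N) = 1) ∧ FreeGroup.lift ((↑) : S → G) u = 1 := by
    intro u
    rw [MonoidHom.mem_ker, SemidirectProduct.ext_iff, funext_iff, ← hom_right π hT u]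
    rfl
  have hle : Subgroup.normalClosure R ≤ (q.comp (hom π hT)).ker :=
    Subgroup.normalClosure_le_normal fun r hr =>
      (hker r).2 ⟨fun x => (QuotientGroup.eq_one_iff _).2 (hRN r hr x), hR hr⟩
  exact (QuotientGroup.eq_one_iff _).1 (((hker u).1 (hle hu)).1 x)

end Rewriting

theorem Rewriting.mk_rewrite_lift_eq {G : Type*} [Group G] [DecidableEq G] {H : Subgroup G}
    {π : G → H} (hπ : ∀ h : H, π h = h) {S : Set G} {T : Set H}
    (hT : ∀ (q : G) (s : S), (π q)⁻¹ * π (q * s) ∈ T) {σ : FreeGroup T →* FreeGroup S}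
    (hσ : ∀ z, FreeGroup.lift (↑) (σ z) = (FreeGroup.lift ((↑) : T → H) z : G)) {n : ℕ}
    (hσn : ∀ t, (σ (.of t)).norm < n) (z : FreeGroup T) (x : H) :
    (rewrite π hT x (σ z) : FreeGroup T ⧸ Subgroup.normalClosure (shortRelators T n)) = z := by
  induction z using FreeGroup.induction_on generalizing x with
  | C1 => simp [rewrite_one]
  | of t =>
    refine mk_eq_mk_of_lift_eq ?_ ?_
    · rw [lift_rewrite, hσ, FreeGroup.lift_apply_of, ← Subgroup.coe_mul, hπ, hπ,
        inv_mul_cancel_left]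
    · grw [norm_rewrite_le, FreeGroup.norm_of]
      exact hσn t
  | inv_of t ih =>
    rw [map_inv, rewrite_inv, QuotientGroup.mk_inv, hσ, FreeGroup.lift_apply_of,
      ← Subgroup.coe_inv, ← Subgroup.coe_mul, ih, QuotientGroup.mk_inv]
  | mul u v ihu ihv =>
    rw [map_mul, rewrite_mul, QuotientGroup.mk_mul, hσ, ← Subgroup.coe_mul, ihu, ihv,
      QuotientGroup.mk_mul]

theorem boundedlyPresentedBy_subgroup_of_retraction {G : Type*} [Group G] [DecidableEq G]
    {H : Subgroup G} (π : G → H) (hπ : ∀ h : H, π h = h) {S : Set G}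
    (hS : BoundedlyPresentedBy G S) {T : Set H}
    (hT : ∀ (q : G) (s : S), (π q)⁻¹ * π (q * s) ∈ T) {m : ℕ}
    (hm : ∀ t ∈ T, ∃ u : FreeGroup S, FreeGroup.lift (↑) u = (t : G) ∧ u.norm ≤ m) :
    BoundedlyPresentedBy H T := by
  rw [boundedlyPresentedBy_iff] at hS ⊢
  obtain ⟨hsurj, n, hker⟩ := hS
  choose σ₀ hσ₀ hσ₀m using fun t : T => hm t t.2
  let σ : FreeGroup T →* FreeGroup S := FreeGroup.lift σ₀
  have hσ : ∀ z, FreeGroup.lift (↑) (σ z) = (FreeGroup.lift ((↑) : T → H) z : G) := by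
    have : (FreeGroup.lift ((↑) : S → G)).comp σ = H.subtype.comp (FreeGroup.lift (↑)) :=
      FreeGroup.ext_hom _ _ fun t => by simp [σ, hσ₀]
    exact DFunLike.congr_fun this
  have hσn : ∀ t, (σ (.of t)).norm < max n (m + 1) := fun t => by
    simpa [σ] using (hσ₀m t).trans_lt (m.lt_succ_self.trans_le (le_max_right _ _))
  refine ⟨fun h => ?_, max n (m + 1), fun z hz => ?_⟩
  · obtain ⟨u, hu⟩ := hsurj h
    refine ⟨Rewriting.rewrite π hT 1 u, ?_⟩
    rw [Rewriting.lift_rewrite, hu, one_mul, hπ, ← Subgroup.coe_one, hπ, inv_one, one_mul]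
  · have hσz : σ z ∈ Subgroup.normalClosure (shortRelators S n) :=
      hker (by rw [MonoidHom.mem_ker, hσ, hz, Subgroup.coe_one])
    have hrewrite := Rewriting.rewrite_mem_of_mem_normalClosure π hT (fun r hr => hr.2)
      (fun r hr x => Subgroup.subset_normalClosure
        (shortRelators_mono (le_max_left n (m + 1)) (Rewriting.rewrite_mem_shortRelators π hT hr x)))
      hσz 1
    rw [← QuotientGroup.eq_one_iff, ← Rewriting.mk_rewrite_lift_eq hπ hT hσ hσn z 1,
      Subgroup.coe_one]
    exact (QuotientGroup.eq_one_iff _).2 hrewrite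

theorem boundedlyPresentedBy_of_subgroup {G : Type*} [Group G] [DecidableEq G]
    {H : Subgroup G} (π : G → H) {T : Set H} (hT : BoundedlyPresentedBy H T) {S : Set G}
    (hTS : ∀ t ∈ T, (t : G) ∈ S) (hπS : ∀ g, (π g : G)⁻¹ * g ∈ S) {m : ℕ}
    (hm : ∀ q, ∀ s ∈ S, ∃ w : FreeGroup T,
      FreeGroup.lift (↑) w = (π q)⁻¹ * π (q * s) ∧ w.norm ≤ m) :
    BoundedlyPresentedBy G S := by
  rw [boundedlyPresentedBy_iff] at hT ⊢
  obtain ⟨hsurj, n, hker⟩ := hT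
  let ι : FreeGroup T →* FreeGroup S := FreeGroup.map fun t => ⟨t, hTS t t.2⟩
  have hι : ∀ z, FreeGroup.lift (↑) (ι z) = (FreeGroup.lift ((↑) : T → H) z : G) := by
    have : (FreeGroup.lift ((↑) : S → G)).comp ι = H.subtype.comp (FreeGroup.lift (↑)) :=
      FreeGroup.ext_hom _ _ fun t => by simp [ι]
    exact DFunLike.congr_fun this
  let N := Subgroup.normalClosure (shortRelators S (max n (m + 3)))
  have hιN : (FreeGroup.lift ((↑) : T → H)).ker ≤ ((QuotientGroup.mk' N).comp ι).ker := by
    refine hker.trans (Subgroup.normalClosure_le_normal fun r hr => ?_)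
    rw [SetLike.mem_coe, MonoidHom.mem_ker, MonoidHom.comp_apply, QuotientGroup.mk'_apply,
      QuotientGroup.eq_one_iff]
    exact Subgroup.subset_normalClosure ⟨(FreeGroup.norm_map_le _ r).trans
      (hr.1.trans (le_max_left _ _)), by rw [hι, hr.2, Subgroup.coe_one]⟩
  -- `H ≅ FreeGroup T ⧸ ker` maps to `FreeGroup S ⧸ N` through `ι`
  let κ : H →* FreeGroup S ⧸ N :=
    (FreeGroup.lift ((↑) : T → H)).liftOfSurjective hsurj ⟨_, hιN⟩
  have hκ : ∀ z, κ (FreeGroup.lift (↑) z) = ι z :=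
    MonoidHom.liftOfRightInverse_comp_apply _ _ _ _
  let ρ : G → S := fun g => ⟨(π g : G)⁻¹ * g, hπS g⟩
  refine ⟨fun g => ?_, max n (m + 3), FreeGroup.ker_le_of_mul_of _ N
    (fun g => κ (π g) * (FreeGroup.of (ρ g) : FreeGroup S ⧸ N)) fun g s => ?_⟩
  · obtain ⟨y, hy⟩ := hsurj (π g)
    exact ⟨ι y * .of (ρ g), by simp [hι, hy, ρ]⟩
  · obtain ⟨w, hw, hwm⟩ := hm g s s.2
    have hrel : ((FreeGroup.of (ρ g) * FreeGroup.of s : FreeGroup S) : FreeGroup S ⧸ N) =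
        (ι w * FreeGroup.of (ρ (g * s)) : FreeGroup S) := by
      refine mk_eq_mk_of_lift_eq (by simp [hι, hw, ρ]; group) ?_
      grw [FreeGroup.norm_mul_le, FreeGroup.norm_mul_le, FreeGroup.norm_map_le, hwm]
      simp only [FreeGroup.norm_of]
      omega
    calc κ (π g) * (FreeGroup.of (ρ g) : FreeGroup S ⧸ N) * (FreeGroup.of s : FreeGroup S ⧸ N)
        = κ (π g * FreeGroup.lift (↑) w) * (FreeGroup.of (ρ (g * s)) : FreeGroup S ⧸ N) := by
          rw [mul_assoc, ← QuotientGroup.mk_mul, hrel, QuotientGroup.mk_mul, map_mul, hκ, mul_assoc]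
      _ = _ := by rw [hw, mul_inv_cancel_left, FreeGroup.lift_apply_of]

section Retraction

variable {G : Type*} [Group G] {H : Subgroup G}

theorem Subgroup.exists_retraction_of_mul_eq_univ {K : Set G}
    (hHK : (H : Set G) * K = Set.univ) :
    ∃ π : G → H, (∀ h : H, π h = h) ∧ ∀ g, (π g : G)⁻¹ * g ∈ insert 1 K := by
  classical
  have hdecomp : ∀ g, ∃ h : H, (h : G)⁻¹ * g ∈ K := fun g => by
    obtain ⟨h, hh, k, hk, rfl⟩ : g ∈ (H : Set G) * K := hHK ▸ Set.mem_univ g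
    exact ⟨⟨h, hh⟩, by simpa⟩
  choose π₀ hπ₀ using hdecomp
  refine ⟨fun g => if hg : g ∈ H then ⟨g, hg⟩ else π₀ g, fun h => by simp, fun g => ?_⟩
  by_cases hg : g ∈ H
  · simp [hg]
  · simp [hg, hπ₀]

theorem coe_inv_mul_mem_mul_mul_inv {π : G → H} {L : Set G} (hπL : ∀ g, (π g : G)⁻¹ * g ∈ L)
    (q : G) {S : Set G} {s : G} (hs : s ∈ S) :
    (((π q)⁻¹ * π (q * s) : H) : G) ∈ L * S * L⁻¹ := by
  have : (((π q)⁻¹ * π (q * s) : H) : G) =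
      ((π q : G)⁻¹ * q) * s * ((π (q * s) : G)⁻¹ * (q * s))⁻¹ := by
    push_cast
    group
  rw [this]
  exact Set.mul_mem_mul (Set.mul_mem_mul (hπL q) hs) (Set.inv_mem_inv.2 (hπL _))

variable [TopologicalSpace G] [IsTopologicalGroup G] [T2Space G] [LocallyCompactSpace G]

theorem CompactlyPresented.subgroup_of_retraction (hH : IsClosed (H : Set G)) (π : G → H)
    (hπ : ∀ h : H, π h = h) {L : Set G} (hL : IsCompact L) (hπL : ∀ g, (π g : G)⁻¹ * g ∈ L)
    (hG : CompactlyPresented G) : CompactlyPresented H := by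
  classical
  obtain ⟨S, hS, hbp⟩ := hG
  have hC : IsCompact (L * S * L⁻¹) := (hL.mul hS).mul hL.inv
  obtain ⟨m, hm⟩ := hS.exists_forall_norm_le (boundedlyPresentedBy_iff.1 hbp).1 hC
  exact ⟨((↑) : H → G) ⁻¹' (L * S * L⁻¹), hH.isClosedEmbedding_subtypeVal.isCompact_preimage hC,
    boundedlyPresentedBy_subgroup_of_retraction π hπ hbp
      (fun q s => coe_inv_mul_mem_mul_mul_inv hπL q s.2) fun t ht => hm t ht⟩

theorem CompactlyPresented.of_subgroup (hH : IsClosed (H : Set G)) (π : G → H) {L : Set G}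
    (hL : IsCompact L) (hπL : ∀ g, (π g : G)⁻¹ * g ∈ L) (hH' : CompactlyPresented H) : CompactlyPresented G := by
  classical
  have : LocallyCompactSpace H := hH.locallyCompactSpace
  obtain ⟨T, hT, hbp⟩ := hH'
  have hS : IsCompact ((↑) '' T ∪ L) := (hT.image continuous_subtype_val).union hL
  obtain ⟨m, hm⟩ := hT.exists_forall_norm_le (boundedlyPresentedBy_iff.1 hbp).1
    (hH.isClosedEmbedding_subtypeVal.isCompact_preimage ((hL.mul hS).mul hL.inv))
  exact ⟨_, hS, boundedlyPresentedBy_of_subgroup π hbp (fun t ht => .inl ⟨t, ht, rfl⟩)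
    (fun g => .inr (hπL g)) fun q s hs => hm _ (coe_inv_mul_mem_mul_mul_inv hπL q hs)⟩

end Retraction

/-- a locally compact Hausdorff topological group is compactly presented if and
only if a given closed cocompact subgroup is compactly presented. -/
theorem compactlyPresented_iff_cocompact_subgroup {G : Type*} [Group G] [TopologicalSpace G]
    [IsTopologicalGroup G] [T2Space G] [LocallyCompactSpace G]
    (H : Subgroup G) (hclosed : IsClosed (H : Set G))
    (K : Set G) (hK : IsCompact K) (hHK : (H : Set G) * K = Set.univ) :
    CompactlyPresented G ↔ CompactlyPresented H := by
  obtain ⟨π, hπ, hπK⟩ := Subgroup.exists_retraction_of_mul_eq_univ hHK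
  exact ⟨CompactlyPresented.subgroup_of_retraction hclosed π hπ (hK.insert 1) hπK,
    CompactlyPresented.of_subgroup hclosed π (hK.insert 1) hπK⟩
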